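/- arXiv:1909.13871 — 4 statements merged into one kernel-verified Lean document; each statement's English description precedes it below -/
import Mathlib

section
/- Between any two n-expansion Lie algebras there exists at most one homomorphism of n-expansion Lie algebras, and any such homomorphism is surjective. -/
abbrev F2 := ZMod 2

namespace HigherGenus

abbrev V (ι : Type) := ι → F2

abbrev ML (ι : Type) (i : ℕ) := MultilinearMap F2 (fun _ : Fin i => V ι) F2

variable {ι : Type} [Fintype ι] [DecidableEq ι]

/-- The tensor product of a family of linear functionals, as a multilinear map. -/
noncomputable def funcTensor {i : ℕ} (L : Fin i → (V ι →ₗ[F2] F2)) : ML ι i :=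
  (MultilinearMap.mkPiAlgebra F2 (Fin i) F2).compLinearMap L

/-- `χ_{h 1} ⊗ ⋯ ⊗ χ_{h i}` as a multilinear map. -/
noncomputable def chiTensor (i : ℕ) (h : Fin i → ι) : ML ι i :=
  funcTensor (fun p => LinearMap.proj (h p))

/-- The governing tensor `φ_{(A,x)}`: the sum of `χ_{τ(1)}⊗⋯⊗χ_{τ(i)}` over all bijections
`τ : [i] ≃ A` placing `x` in one of the last two positions. -/
noncomputable def govTensor (i : ℕ) (A : Finset ι) (x : ι) : ML ι i :=
  ∑ τ : Fin i ≃ {a // a ∈ A},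
    if ∀ p : Fin i, ((τ p : ι) = x → i ≤ (p : ℕ) + 2) then
      chiTensor i (fun p => (τ p : ι)) else 0

/-- `Gov(V_B, i)`: the span of the governing tensors supported in `B`. -/
noncomputable def Gov (i : ℕ) (B : Finset ι) : Submodule F2 (ML ι i) :=
  Submodule.span F2
    {φ | ∃ A : Finset ι, ∃ x : ι, A ⊆ B ∧ A.card = i ∧ x ∈ A ∧ φ = govTensor i A x}

/-- `Multi~(V_B, i)`: the span of the injective pure tensors supported in `B`. -/
noncomputable def MultiT (i : ℕ) (B : Finset ι) : Submodule F2 (ML ι i) :=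
  Submodule.span F2
    {φ | ∃ τ : Fin i → ι, Function.Injective τ ∧ (∀ p, τ p ∈ B) ∧ φ = chiTensor i τ}

/-- Evaluation of a multilinear map at a fixed tuple, as a linear map. -/
def mEval {i : ℕ} (σ : Fin i → V ι) : ML ι i →ₗ[F2] F2 where
  toFun b := b σ
  map_add' _ _ := rfl
  map_smul' _ _ := rfl

/-- Plugging the vector `v` into the first slot of a multilinear map. -/
noncomputable def consMapL {i : ℕ} (v : V ι) : ML ι (i + 1) →ₗ[F2] ML ι i :=
  (LinearMap.applyₗ v).comp
    (multilinearCurryLeftEquiv F2 (fun _ : Fin (i + 1) => V ι) F2).toLinearMap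

/-- The standard basis vector `e_j`. -/
def stdb (j : ι) : V ι := Pi.single j 1

/-- The recursively defined subspaces `Cons(V_B, i)`. -/
noncomputable def Cons : (i : ℕ) → Finset ι → Submodule F2 (ML ι i)
  | 0, _ => ⊥
  | 1, B => Gov 1 B
  | 2, B => MultiT 2 B ⊓
      (⨅ σ : Fin 2 → V ι, LinearMap.ker (mEval σ - mEval (σ ∘ (Equiv.swap 0 1))))
  | 3, B => (MultiT 3 B ⊓
      (⨅ j ∈ B, Submodule.comap (consMapL (stdb j)) (Cons 2 (B.erase j)))) ⊓
      (⨅ j₁ : ι, ⨅ j₂ : ι, ⨅ j₃ : ι,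
        LinearMap.ker (mEval ![stdb j₁, stdb j₂, stdb j₃]
          + mEval ![stdb j₃, stdb j₁, stdb j₂] + mEval ![stdb j₂, stdb j₃, stdb j₁]))
  | (i+4), B => (MultiT (i+4) B ⊓
      (⨅ j ∈ B, Submodule.comap (consMapL (stdb j)) (Cons (i+3) (B.erase j)))) ⊓
      (⨅ j₁ : ι, ⨅ j₂ : ι, ⨅ _ : j₁ ≠ j₂,
        LinearMap.ker ((consMapL (stdb j₂)).comp (consMapL (stdb j₁))
          - (consMapL (stdb j₁)).comp (consMapL (stdb j₂))))


/-- The right-nested bracket `[σ_1,[σ_2,[…,[σ_{i−1},σ_i]…]]]`. -/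
def nest {L : Type} [AddCommGroup L] [Module F2 L]
    (br : L →ₗ[F2] L →ₗ[F2] L) : {i : ℕ} → (Fin i → L) → L
  | 0, _ => 0
  | 1, σ => σ 0
  | (_+2), σ => br (σ 0) (nest br (Fin.tail σ))

/-- `(L_•, ψ)` (presented by a bracket `br`, graded pieces `piece m` for `m ≥ 1` with
`piece 0 = ⊥`, and `ψ`) is an expansion Lie algebra over the index set `ι`. -/
structure IsExpLie {ι : Type} [Fintype ι] [DecidableEq ι] {L : Type}
    [AddCommGroup L] [Module F2 L]
    (br : L →ₗ[F2] L →ₗ[F2] L) (piece : ℕ → Submodule F2 L)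
    (ψ : L →ₗ[F2] V ι) : Prop where
  /-- the grading starts in degree 1 -/
  piece_zero : piece 0 = ⊥
  /-- the graded pieces are independent … -/
  indep : iSupIndep piece
  /-- … and give a direct sum decomposition of `L` -/
  span_top : (⨆ m, piece m) = ⊤
  /-- `[L_h, L_k] ⊆ L_{h+k}` -/
  graded : ∀ h k : ℕ, ∀ x ∈ piece h, ∀ y ∈ piece k, br x y ∈ piece (h + k)
  /-- the bracket is alternating -/
  br_self : ∀ x, br x x = 0
  /-- the Jacobi identity -/
  jacobi : ∀ x y z, br x (br y z) + br y (br z x) + br z (br x y) = 0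
  /-- `ψ` is surjective -/
  psi_surj : Function.Surjective ψ
  /-- `ψ` is a homomorphism of graded Lie algebras: it kills brackets
  (the target has the zero bracket) … -/
  psi_br : ∀ x y, ψ (br x y) = 0
  /-- … and it kills every graded piece of degree `≠ 1`
  (the target is concentrated in degree 1) -/
  psi_graded : ∀ m : ℕ, m ≠ 1 → ∀ x ∈ piece m, ψ x = 0
  /-- `ker ψ` is an abelian subalgebra -/
  ker_abelian : ∀ x y, ψ x = 0 → ψ y = 0 → br x y = 0
  /-- `[L_•, L_•] = ker ψ` -/
  comm_eq_ker : Submodule.span F2 {z | ∃ x y, z = br x y} = LinearMap.ker ψ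
  /-- for `i ≥ 4`, nested brackets with entries in `L_1` are unchanged under any permutation
  of the first `i − 2` entries -/
  perm_invariant : ∀ (m : ℕ) (σ : Fin (m + 4) → L), (∀ p, σ p ∈ piece 1) →
    ∀ e : Equiv.Perm (Fin (m + 4)), (∀ p : Fin (m + 4), m + 2 ≤ (p : ℕ) → e p = p) →
    nest br (σ ∘ e) = nest br σ
  /-- for `i ≥ 4`, nested brackets with entries in `L_1` vanish as soon as two of the first
  `i − 2` entries coincide -/
  repeat_vanish : ∀ (m : ℕ) (σ : Fin (m + 4) → L), (∀ p, σ p ∈ piece 1) →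
    (∃ s t : Fin (m + 4), s ≠ t ∧ (s : ℕ) < m + 2 ∧ (t : ℕ) < m + 2 ∧ σ s = σ t) →
    nest br σ = 0
  /-- `[τ_1,[τ_1,τ_2]] = 0` for `τ_1, τ_2 ∈ L_1` with `ψ(τ_1)` a standard basis vector -/
  basis_bracket_sq : ∀ x y : L, x ∈ piece 1 → y ∈ piece 1 →
    (∃ j : ι, ψ x = stdb j) → br x (br x y) = 0

/-- A bundled expansion Lie algebra over the index set `ι`. -/
structure ExpLieAlg (ι : Type) [Fintype ι] [DecidableEq ι] where
  L : Type
  [acg : AddCommGroup L]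
  [mod : Module F2 L]
  br : L →ₗ[F2] L →ₗ[F2] L
  piece : ℕ → Submodule F2 L
  psi : L →ₗ[F2] V ι
  isexp : IsExpLie br piece psi

attribute [instance] ExpLieAlg.acg ExpLieAlg.mod

/-- A homomorphism of expansion Lie algebras: a linear map commuting with the brackets,
preserving the gradings, and compatible with the structure maps `ψ`. -/
def IsExpLieHom {ι : Type} [Fintype ι] [DecidableEq ι] (E E' : ExpLieAlg ι)
    (f : E.L →ₗ[F2] E'.L) : Prop :=
  (∀ x y, f (E.br x y) = E'.br (f x) (f y)) ∧
  (∀ m : ℕ, ∀ x ∈ E.piece m, f x ∈ E'.piece m) ∧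
  (∀ x, E'.psi (f x) = E.psi x)

/-!
Because `ker ψ = [L, L]` and the bracket adds degrees, `ker ψ` lies in the sum of the brackets
`[L_h, L_k]` with `h, k ≥ 1`; by independence of the grading, `L_m ∩ ker ψ` is spanned by such
brackets with `h + k = m`. Hence `L_1 ∩ ker ψ = 0`, every `L_m` with `m ≥ 2` is spanned by brackets
of lower pieces, so `L` is generated by `L_1` as a Lie algebra, and `ψ` maps `L_1` bijectively onto
`V_[n]`. A homomorphism commutes with the `ψ`'s, so it is determined on `L_1` and its image contains
`L'_1`; being a Lie algebra map, it is therefore unique and surjective.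
-/

theorem _root_.iSupIndep.inf_iSup_eq_of_le {β α : Type*} [CompleteLattice α] [IsModularLattice α]
    {p q : β → α} (hp : iSupIndep p) (hqp : q ≤ p) (i : β) : p i ⊓ ⨆ j, q j = q i := by
  have hdisj : Disjoint (p i) (⨆ j, ⨆ (_ : j ≠ i), q j) :=
    (hp i).mono_right (iSup₂_mono fun j _ => hqp j)
  rw [iSup_split_single q i, inf_comm, sup_inf_assoc_of_le _ (hqp i), inf_comm, hdisj.eq_bot,
    sup_bot_eq]

section

variable {L : Type} [AddCommGroup L] [Module F2 L]

def homogeneousBrackets (br : L →ₗ[F2] L →ₗ[F2] L) (piece : ℕ → Submodule F2 L) (m : ℕ) :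
    Submodule F2 L :=
  ⨆ (h : ℕ) (k : ℕ) (_ : 0 < h ∧ 0 < k ∧ h + k = m), Submodule.map₂ br (piece h) (piece k)

theorem homogeneousBrackets_one (br : L →ₗ[F2] L →ₗ[F2] L) (piece : ℕ → Submodule F2 L) :
    homogeneousBrackets br piece 1 = ⊥ := by
  simp only [homogeneousBrackets, iSup_eq_bot]
  omega

namespace IsExpLie

variable {br : L →ₗ[F2] L →ₗ[F2] L} {piece : ℕ → Submodule F2 L} {ψ : L →ₗ[F2] V ι}
  (hE : IsExpLie br piece ψ)
include hE

theorem homogeneousBrackets_le (m : ℕ) : homogeneousBrackets br piece m ≤ piece m :=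
  iSup₂_le fun h k => iSup_le fun ⟨_, _, hm⟩ => Submodule.map₂_le.2 fun x hx y hy =>
    hm ▸ hE.graded h k x hx y hy

theorem ker_le_iSup_homogeneousBrackets :
    LinearMap.ker ψ ≤ ⨆ m, homogeneousBrackets br piece m := by
  have hbr : LinearMap.ker ψ ≤ Submodule.map₂ br ⊤ ⊤ := by
    rw [← hE.comm_eq_ker, Submodule.span_le]
    rintro _ ⟨x, y, rfl⟩
    exact Submodule.apply_mem_map₂ br trivial trivial
  rw [← hE.span_top, Submodule.map₂_iSup_left] at hbr
  simp only [Submodule.map₂_iSup_right] at hbr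
  refine hbr.trans (iSup₂_le fun h k => ?_)
  rcases h.eq_zero_or_pos with rfl | hh
  · simp [hE.piece_zero]
  rcases k.eq_zero_or_pos with rfl | hk
  · simp [hE.piece_zero]
  exact le_iSup_of_le (h + k) <| le_iSup_of_le h <| le_iSup_of_le k <|
    le_iSup_of_le ⟨hh, hk, rfl⟩ le_rfl

theorem piece_inf_ker_le (m : ℕ) :
    piece m ⊓ LinearMap.ker ψ ≤ homogeneousBrackets br piece m :=
  calc piece m ⊓ LinearMap.ker ψ ≤ piece m ⊓ ⨆ m', homogeneousBrackets br piece m' :=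
        inf_le_inf_left _ hE.ker_le_iSup_homogeneousBrackets
    _ = homogeneousBrackets br piece m :=
        hE.indep.inf_iSup_eq_of_le hE.homogeneousBrackets_le m

theorem disjoint_piece_one_ker : Disjoint (piece 1) (LinearMap.ker ψ) := by
  rw [disjoint_iff, ← le_bot_iff, ← homogeneousBrackets_one br piece]
  exact hE.piece_inf_ker_le 1

theorem eq_of_psi_eq {x y : L} (hx : x ∈ piece 1) (hy : y ∈ piece 1) (hxy : ψ x = ψ y) :
    x = y :=
  sub_eq_zero.1 <| Submodule.disjoint_def.1 hE.disjoint_piece_one_ker _ (sub_mem hx hy)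
    (by simp [hxy])

theorem map_piece_one : (piece 1).map ψ = ⊤ := by
  rw [eq_top_iff, ← LinearMap.range_eq_top.2 hE.psi_surj, LinearMap.range_eq_map, ← hE.span_top,
    Submodule.map_iSup]
  refine iSup_le fun m => ?_
  rcases eq_or_ne m 1 with rfl | hm
  · exact le_rfl
  · rintro _ ⟨x, hx, rfl⟩
    rw [hE.psi_graded m hm x hx]
    exact zero_mem _

theorem eq_top_of_piece_one_le {M : Submodule F2 L} (h1 : piece 1 ≤ M)
    (hbr : ∀ x ∈ M, ∀ y ∈ M, br x y ∈ M) : M = ⊤ := by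
  suffices ∀ m, piece m ≤ M by
    rw [eq_top_iff, ← hE.span_top]
    exact iSup_le this
  intro m
  induction m using Nat.strong_induction_on with
  | _ m ih =>
    match m with
    | 0 => simp [hE.piece_zero]
    | 1 => exact h1
    | m + 2 =>
      have hker : piece (m + 2) ≤ LinearMap.ker ψ := fun x hx =>
        hE.psi_graded (m + 2) (by omega) x hx
      refine (le_inf le_rfl hker).trans <| (hE.piece_inf_ker_le (m + 2)).trans ?_
      refine iSup₂_le fun h k => iSup_le fun ⟨hh, hk, hm⟩ => Submodule.map₂_le.2 ?_
      exact fun x hx y hy => hbr x (ih h (by omega) hx) y (ih k (by omega) hy)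

end IsExpLie

end

namespace IsExpLieHom

variable {E E' : ExpLieAlg ι}

theorem unique {f g : E.L →ₗ[F2] E'.L} (hf : IsExpLieHom E E' f) (hg : IsExpLieHom E E' g) :
    f = g := by
  refine LinearMap.eqLocus_eq_top.1 <| E.isexp.eq_top_of_piece_one_le (fun x hx => ?_) ?_
  · exact E'.isexp.eq_of_psi_eq (hf.2.1 1 x hx) (hg.2.1 1 x hx) (by rw [hf.2.2, hg.2.2])
  · intro x hx y hy
    simp only [LinearMap.mem_eqLocus] at hx hy ⊢
    rw [hf.1, hg.1, hx, hy]

theorem surjective {f : E.L →ₗ[F2] E'.L} (hf : IsExpLieHom E E' f) : Function.Surjective f := by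
  rw [← LinearMap.range_eq_top]
  refine E'.isexp.eq_top_of_piece_one_le (fun z hz => ?_) ?_
  · obtain ⟨x, hx, hxz⟩ : E'.psi z ∈ (E.piece 1).map E.psi := E.isexp.map_piece_one ▸ trivial
    exact ⟨x, E'.isexp.eq_of_psi_eq (hf.2.1 1 x hx) hz (by rw [hf.2.2, hxz])⟩
  · rintro _ ⟨x, rfl⟩ _ ⟨y, rfl⟩
    exact ⟨E.br x y, hf.1 x y⟩

end IsExpLieHom

/-- Between any two `n`-expansion Lie algebras there is at most one homomorphism of
`n`-expansion Lie algebras, and any such homomorphism is surjective. -/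
theorem statement6 (n : ℕ) (E E' : ExpLieAlg (Fin n)) :
    (∀ f g : E.L →ₗ[F2] E'.L, IsExpLieHom E E' f → IsExpLieHom E E' g → f = g) ∧
    (∀ f : E.L →ₗ[F2] E'.L, IsExpLieHom E E' f → Function.Surjective f) :=
  ⟨fun _ _ hf hg => hf.unique hg, fun _ hf => hf.surjective⟩

end HigherGenus
end

section
/- Let (L_•, ψ) be an n-expansion Lie algebra, let i ≥ 1, let ι : V_[n] → L_1 be the inverse of the isomorphism induced by ψ, and define the i-multilinear map ψ_i : V_[n]^i → L_i by ψ_i(v_1,…,v_i) := [ι(v_1),[ι(v_2),[…,[ι(v_{i−1}),ι(v_i)]…]]] (and ψ_1 := ι). Then for every F2-linear functional λ : L_i → F2, the multilinear map λ ∘ ψ_i belongs to Cons(V_[n], i). -/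
namespace HigherGenus

section Tensors

lemma chiTensor_apply {ι : Type} {i : ℕ} (h : Fin i → ι) (σ : Fin i → V ι) :
    chiTensor i h σ = ∏ p, σ p (h p) := by
  simp [chiTensor, funcTensor]

variable {ι : Type} [DecidableEq ι]

lemma chiTensor_apply_stdb {i : ℕ} (τ h : Fin i → ι) :
    chiTensor i τ (stdb ∘ h) = if τ = h then 1 else 0 := by
  rw [chiTensor_apply]
  split_ifs with hτh
  · simp [hτh, stdb]
  · obtain ⟨p, hp⟩ := Function.ne_iff.mp hτh
    exact Finset.prod_eq_zero (Finset.mem_univ p) (by simp [stdb, Ne.symm hp])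

lemma sum_smul_chiTensor [Fintype ι] {i : ℕ} (b : ML ι i) :
    ∑ h : Fin i → ι, b (stdb ∘ h) • chiTensor i h = b := by
  refine Module.Basis.ext_multilinear (fun _ => Pi.basisFun F2 ι) fun h => ?_
  have hstdb : (fun p => Pi.basisFun F2 ι (h p)) = stdb ∘ h := by
    ext p; simp [stdb]
  rw [hstdb]
  simp [chiTensor_apply_stdb]

def IsSupportedIn {i : ℕ} (b : ML ι i) (B : Finset ι) : Prop :=
  ∀ h : Fin i → ι, (∃ p, h p ∉ B) → b (stdb ∘ h) = 0

lemma mem_multiT_of_isSupportedIn [Fintype ι] {i : ℕ} {b : ML ι i} {B : Finset ι}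
    (hinj : ∀ h : Fin i → ι, ¬ Function.Injective h → b (stdb ∘ h) = 0)
    (hB : IsSupportedIn b B) : b ∈ MultiT i B := by
  rw [← sum_smul_chiTensor b]
  refine Submodule.sum_mem _ fun h _ => ?_
  by_cases hgood : Function.Injective h ∧ ∀ p, h p ∈ B
  · exact Submodule.smul_mem _ _ (Submodule.subset_span ⟨h, hgood.1, hgood.2, rfl⟩)
  · rcases not_and_or.mp hgood with hh | hh
    · simp [hinj h hh]
    · push Not at hh
      simp [hB h hh]

lemma govTensor_one_singleton (x : ι) :
    govTensor 1 {x} x = chiTensor 1 (fun _ => x) := by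
  have : Unique (Fin 1 ≃ {a // a ∈ ({x} : Finset ι)}) :=
    ⟨⟨Equiv.ofUnique _ _⟩, fun e => Equiv.ext fun p => Subsingleton.elim _ _⟩
  rw [govTensor, Fintype.sum_unique, if_pos fun _ _ => by omega]
  congr 1
  funext p
  exact Finset.mem_singleton.mp ((default : Fin 1 ≃ {a // a ∈ ({x} : Finset ι)}) p).2

lemma mem_gov_one_of_isSupportedIn [Fintype ι] {b : ML ι 1} {B : Finset ι}
    (hB : IsSupportedIn b B) : b ∈ Gov 1 B := by
  rw [← sum_smul_chiTensor b]
  refine Submodule.sum_mem _ fun h _ => ?_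
  by_cases h0 : h 0 ∈ B
  · have hh : h = fun _ => h 0 := funext fun p => by rw [Subsingleton.elim p 0]
    refine Submodule.smul_mem _ _ (Submodule.subset_span ⟨{h 0}, h 0, ?_, ?_, ?_, ?_⟩) <;>
      simp [h0, govTensor_one_singleton, ← hh]
  · simp [hB h ⟨0, h0⟩]

end Tensors

lemma neg_eq_self_of_module_F2 {M : Type} [AddCommGroup M] [Module F2 M] (a : M) : -a = a := by
  rw [← neg_one_smul F2 a, ZMod.neg_eq_self_mod_two, one_smul]

lemma cons_cons_comp_swap {X : Type} {k : ℕ} (x y : X) (σ : Fin k → X) :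
    (Fin.cons x (Fin.cons y σ) : Fin (k + 2) → X) ∘ Equiv.swap 0 1 =
      Fin.cons y (Fin.cons x σ) := by
  funext p
  refine Fin.cases ?_ (fun q => Fin.cases ?_ (fun r => ?_) q) p
  · simp
  · simp [show ((0 : Fin (k + 1)).succ : Fin (k + 2)) = 1 from rfl]
  · have h0 : (r.succ.succ : Fin (k + 2)) ≠ 0 := Fin.succ_ne_zero _
    have h1 : (r.succ.succ : Fin (k + 2)) ≠ 1 :=
      fun h => Fin.succ_ne_zero r (Fin.succ_injective _ h)
    simp [Equiv.swap_apply_of_ne_of_ne h0 h1]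

section NestedBrackets

variable {L : Type} [AddCommGroup L] [Module F2 L] {br : L →ₗ[F2] L →ₗ[F2] L}

lemma nest_cons {k : ℕ} (x : L) (σ : Fin (k + 1) → L) :
    nest br (Fin.cons x σ : Fin (k + 2) → L) = br x (nest br σ) := rfl

variable {ι : Type} [Fintype ι] [DecidableEq ι] {piece : ℕ → Submodule F2 L} {ψ : L →ₗ[F2] V ι}

namespace IsExpLie

lemma br_comm (hE : IsExpLie br piece ψ) (x y : L) : br x y = br y x := by
  have h := hE.br_self (x + y)
  simp only [map_add, LinearMap.add_apply, hE.br_self, zero_add, add_zero] at h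
  rw [eq_neg_of_add_eq_zero_left h, neg_eq_self_of_module_F2]

lemma nest_mem_piece (hE : IsExpLie br piece ψ) :
    ∀ {i : ℕ} (σ : Fin i → L), (∀ p, σ p ∈ piece 1) → nest br σ ∈ piece i
  | 0, _, _ => zero_mem _
  | 1, σ, hσ => hσ 0
  | k + 2, σ, hσ => by
    have h := hE.graded 1 (k + 1) _ (hσ 0) _ (nest_mem_piece hE (Fin.tail σ) fun p => hσ p.succ)
    rwa [add_comm 1] at h

lemma nest_comp_swap (hE : IsExpLie br piece ψ) {m : ℕ} (σ : Fin (m + 4) → L)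
    (hσ : ∀ p, σ p ∈ piece 1) : nest br (σ ∘ Equiv.swap 0 1) = nest br σ :=
  hE.perm_invariant m σ hσ _ fun p hp =>
    Equiv.swap_apply_of_ne_of_ne (by rintro rfl; simp at hp) (by rintro rfl; simp at hp)

lemma br_br_eq_zero (hE : IsExpLie br piece ψ) {x y z : L} (hx : x ∈ piece 1) (hy : y ∈ piece 1)
    (hz : z ∈ piece 1) (hψx : ∃ j, ψ x = stdb j) (h : x = y ∨ x = z ∨ y = z) :
    br x (br y z) = 0 := by
  rcases h with rfl | rfl | rfl
  · exact hE.basis_bracket_sq x z hx hz hψx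
  · rw [hE.br_comm y x]
    exact hE.basis_bracket_sq x y hx hy hψx
  · rw [hE.br_self, map_zero]

lemma nest_eq_zero_of_not_injective (hE : IsExpLie br piece ψ) :
    ∀ {i : ℕ} (σ : Fin i → L), (∀ p, σ p ∈ piece 1) → (∀ p, ∃ j, ψ (σ p) = stdb j) →
      ¬ Function.Injective σ → nest br σ = 0
  | 0, σ, _, _, hσ => (hσ fun p => p.elim0).elim
  | 1, σ, _, _, hσ => (hσ (Function.injective_of_subsingleton σ)).elim
  | 2, σ, _, _, hσ => by
    obtain ⟨a, b, hab, hne⟩ := Function.not_injective_iff.mp hσ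
    have h01 : σ 0 = σ 1 := by
      fin_cases a <;> fin_cases b <;> simp_all
    rw [show nest br σ = br (σ 0) (σ 1) from rfl, h01, hE.br_self]
  | 3, σ, h1, hψ, hσ => by
    obtain ⟨a, b, hab, hne⟩ := Function.not_injective_iff.mp hσ
    have hrep : σ 0 = σ 1 ∨ σ 0 = σ 2 ∨ σ 1 = σ 2 := by
      fin_cases a <;> fin_cases b <;> simp_all
    exact hE.br_br_eq_zero (h1 0) (h1 1) (h1 2) (hψ 0) hrep
  | m + 4, σ, h1, hψ, hσ => by
    have nest_eq_zero_of_tail : ∀ τ : Fin (m + 4) → L, (∀ p, τ p ∈ piece 1) →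
        (∀ p, ∃ j, ψ (τ p) = stdb j) → ¬ Function.Injective (Fin.tail τ) → nest br τ = 0 := by
      intro τ h1 hψ hτ
      show br (τ 0) (nest br (Fin.tail τ)) = 0
      rw [nest_eq_zero_of_not_injective hE (Fin.tail τ) (fun p => h1 _) (fun p => hψ _) hτ,
        map_zero]
    rw [← Fin.cons_self_tail σ, Fin.cons_injective_iff, not_and_or, not_not] at hσ
    rcases hσ with ⟨q, hq⟩ | htail
    · by_cases hq' : (q : ℕ) < m + 1
      · exact hE.repeat_vanish m σ h1
          ⟨0, q.succ, (Fin.succ_ne_zero q).symm, by simp, by simpa using hq', hq.symm⟩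
      · -- Swapping the first two entries moves the repeat of `σ 0` into the tail.
        rw [← hE.nest_comp_swap σ h1]
        refine nest_eq_zero_of_tail _ (fun p => h1 _) (fun p => hψ _) fun hinj => ?_
        have hq0 : q ≠ 0 := by rintro rfl; simp at hq'
        have hq1 : q.succ ≠ 1 := fun h => hq0 (Fin.succ_injective _ h)
        refine hq0 (hinj (a₁ := q) (a₂ := 0) ?_)
        simp only [Fin.tail, Function.comp_apply, Fin.succ_zero_eq_one, Equiv.swap_apply_right,
          Equiv.swap_apply_of_ne_of_ne (Fin.succ_ne_zero q) hq1]
        exact hq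
    · exact nest_eq_zero_of_tail σ h1 hψ htail

end IsExpLie

end NestedBrackets

section Main

variable {ι : Type} [Fintype ι] [DecidableEq ι] (E : ExpLieAlg ι) (inv : V ι →ₗ[F2] E.L)

lemma apply_stdb_eq_zero_of_not_injective (hinv1 : ∀ v, inv v ∈ E.piece 1)
    (hinv2 : ∀ v, E.psi (inv v) = v) {i : ℕ} {Λ : E.L →ₗ[F2] F2} {b : ML ι i}
    (hb : ∀ σ, b σ = Λ (nest E.br (inv ∘ σ))) {h : Fin i → ι} (hh : ¬ Function.Injective h) :
    b (stdb ∘ h) = 0 := by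
  rw [hb, E.isexp.nest_eq_zero_of_not_injective (inv ∘ stdb ∘ h) (fun p => hinv1 _)
    (fun p => ⟨h p, hinv2 _⟩) fun hinj => hh (hinj.of_comp (f := inv ∘ stdb)), map_zero]

lemma mem_multiT_of_eq_nest (hinv1 : ∀ v, inv v ∈ E.piece 1)
    (hinv2 : ∀ v, E.psi (inv v) = v) {i : ℕ} {Λ : E.L →ₗ[F2] F2} {b : ML ι i} {B : Finset ι}
    (hb : ∀ σ, b σ = Λ (nest E.br (inv ∘ σ))) (hB : IsSupportedIn b B) : b ∈ MultiT i B :=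
  mem_multiT_of_isSupportedIn
    (fun _ hh => apply_stdb_eq_zero_of_not_injective E inv hinv1 hinv2 hb hh) hB

lemma consMapL_apply_eq_nest {k : ℕ} {Λ : E.L →ₗ[F2] F2} {b : ML ι (k + 2)}
    (hb : ∀ σ, b σ = Λ (nest E.br (inv ∘ σ))) (v : V ι) (σ : Fin (k + 1) → V ι) :
    consMapL v b σ = (Λ ∘ₗ E.br (inv v)) (nest E.br (inv ∘ σ)) := by
  rw [show consMapL v b σ = b (Fin.cons v σ) from rfl, hb, Fin.comp_cons, nest_cons]
  rfl

lemma isSupportedIn_consMapL (hinv1 : ∀ v, inv v ∈ E.piece 1)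
    (hinv2 : ∀ v, E.psi (inv v) = v) {k : ℕ} {Λ : E.L →ₗ[F2] F2} {b : ML ι (k + 1)}
    {B : Finset ι} (hb : ∀ σ, b σ = Λ (nest E.br (inv ∘ σ))) (hB : IsSupportedIn b B) (j : ι) :
    IsSupportedIn (consMapL (stdb j) b) (B.erase j) := by
  rintro h ⟨p, hp⟩
  rw [show consMapL (stdb j) b (stdb ∘ h) = b (stdb ∘ Fin.cons j h) by
    rw [Fin.comp_cons]; rfl]
  by_cases hpj : h p = j
  · refine apply_stdb_eq_zero_of_not_injective E inv hinv1 hinv2 hb ?_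
    rw [Fin.cons_injective_iff]
    exact fun hinj => hinj.1 ⟨p, hpj⟩
  · exact hB _ ⟨p.succ, by simpa [hpj] using hp⟩

lemma apply_cyclic_sum_eq_zero_of_eq_nest {Λ : E.L →ₗ[F2] F2} {b : ML ι 3}
    (hb : ∀ σ, b σ = Λ (nest E.br (inv ∘ σ))) (u v w : V ι) :
    b ![u, v, w] + b ![w, u, v] + b ![v, w, u] = 0 := by
  rw [hb, hb, hb, ← map_add, ← map_add]
  convert map_zero Λ using 2
  rw [add_right_comm]
  exact E.isexp.jacobi _ _ _

lemma apply_cons_cons_comm_of_eq_nest (hinv1 : ∀ v, inv v ∈ E.piece 1) {m : ℕ}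
    {Λ : E.L →ₗ[F2] F2} {b : ML ι (m + 4)} (hb : ∀ σ, b σ = Λ (nest E.br (inv ∘ σ)))
    (u v : V ι) (σ : Fin (m + 2) → V ι) :
    b (Fin.cons u (Fin.cons v σ)) = b (Fin.cons v (Fin.cons u σ)) := by
  rw [hb, hb, ← cons_cons_comp_swap, ← Function.comp_assoc,
    E.isexp.nest_comp_swap (inv ∘ _) fun _ => hinv1 _]

theorem mem_cons_of_eq_nest (hinv1 : ∀ v, inv v ∈ E.piece 1)
    (hinv2 : ∀ v, E.psi (inv v) = v) :
    ∀ {i : ℕ} (Λ : E.L →ₗ[F2] F2) {b : ML ι i} {B : Finset ι},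
      (∀ σ, b σ = Λ (nest E.br (inv ∘ σ))) → IsSupportedIn b B → b ∈ Cons i B
  | 0, Λ, b, _, hb, _ => by
    show b ∈ (⊥ : Submodule F2 (ML ι 0))
    rw [Submodule.mem_bot]
    ext σ
    simp [hb, nest]
  | 1, _, _, _, _, hB => mem_gov_one_of_isSupportedIn hB
  | 2, Λ, b, B, hb, hB => by
    refine ⟨mem_multiT_of_eq_nest E inv hinv1 hinv2 hb hB,
      Submodule.mem_iInf _ |>.mpr fun σ => ?_⟩
    rw [LinearMap.mem_ker, LinearMap.sub_apply, sub_eq_zero]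
    show b σ = b (σ ∘ Equiv.swap 0 1)
    rw [hb, hb]
    exact congrArg Λ (E.isexp.br_comm _ _)
  | 3, Λ, b, B, hb, hB => by
    rw [Cons]
    simp only [Submodule.mem_inf, Submodule.mem_iInf, Submodule.mem_comap, LinearMap.mem_ker]
    refine ⟨⟨mem_multiT_of_eq_nest E inv hinv1 hinv2 hb hB, fun j _ => ?_⟩, fun j₁ j₂ j₃ => ?_⟩
    · exact mem_cons_of_eq_nest hinv1 hinv2 _ (consMapL_apply_eq_nest E inv hb (stdb j))
        (isSupportedIn_consMapL E inv hinv1 hinv2 hb hB j)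
    · exact apply_cyclic_sum_eq_zero_of_eq_nest E inv hb _ _ _
  | m + 4, Λ, b, B, hb, hB => by
    rw [Cons]
    simp only [Submodule.mem_inf, Submodule.mem_iInf, Submodule.mem_comap,
      LinearMap.mem_ker, LinearMap.sub_apply, sub_eq_zero]
    refine ⟨⟨mem_multiT_of_eq_nest E inv hinv1 hinv2 hb hB, fun j _ => ?_⟩, fun _ _ _ => ?_⟩
    · exact mem_cons_of_eq_nest hinv1 hinv2 _ (consMapL_apply_eq_nest E inv hb (stdb j))
        (isSupportedIn_consMapL E inv hinv1 hinv2 hb hB j)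
    · exact MultilinearMap.ext fun σ => apply_cons_cons_comm_of_eq_nest E inv hinv1 hb _ _ σ

end Main

theorem statement7_general (n : ℕ) (E : ExpLieAlg (Fin n)) (i : ℕ)
    (inv : V (Fin n) →ₗ[F2] E.L)
    (hinv1 : ∀ v, inv v ∈ E.piece 1) (hinv2 : ∀ v, E.psi (inv v) = v)
    (lam : ↥(E.piece i) →ₗ[F2] F2)
    (b : ML (Fin n) i)
    (hb : ∀ (σ : Fin i → V (Fin n)) (z : ↥(E.piece i)),
      (z : E.L) = nest E.br (fun p => inv (σ p)) → b σ = lam z) :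
    b ∈ Cons i Finset.univ := by
  obtain ⟨Λ, hΛ⟩ := LinearMap.exists_extend lam
  refine mem_cons_of_eq_nest E inv hinv1 hinv2 Λ (fun σ => ?_)
    fun _ ⟨_, hp⟩ => absurd (Finset.mem_univ _) hp
  rw [hb σ ⟨_, E.isexp.nest_mem_piece _ fun p => hinv1 (σ p)⟩ rfl, ← hΛ]
  rfl

/-- For an `n`-expansion Lie algebra `(L_•, ψ)`, `i ≥ 1`, `ι` the inverse of the isomorphism
`L_1 ≅ V_[n]` induced by `ψ`, and any linear functional `λ : L_i → F2`, the `i`-multilinear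
map `λ ∘ ψ_i`, where `ψ_i (v_1,…,v_i) = [ι v_1,[ι v_2,[…,[ι v_{i−1}, ι v_i]…]]]`, belongs to
`Cons(V_[n], i)`. -/
theorem statement7 (n : ℕ) (E : ExpLieAlg (Fin n)) (i : ℕ) (hi : 1 ≤ i)
    (inv : V (Fin n) →ₗ[F2] E.L)
    (hinv1 : ∀ v, inv v ∈ E.piece 1) (hinv2 : ∀ v, E.psi (inv v) = v)
    (lam : ↥(E.piece i) →ₗ[F2] F2)
    (b : ML (Fin n) i)
    (hb : ∀ (σ : Fin i → V (Fin n)) (z : ↥(E.piece i)),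
      (z : E.L) = nest E.br (fun p => inv (σ p)) → b σ = lam z) :
    b ∈ Cons i Finset.univ :=
  statement7_general n E i inv hinv1 hinv2 lam b hb

end HigherGenus
end

section
/- Every n-expansion group (G, φ, (g_1,…,g_n)) is a finite nilpotent 2-group with #G ≤ 2^{n·2^{n−1} − 2^n + n + 1}, the set {g_1,…,g_n} generates G, and #G equals the product over m ≥ 1 of the cardinalities of the lower central series quotients G^(m)/G^(m+1). -/
namespace HigherGenus

variable {ι : Type} [Fintype ι] [DecidableEq ι]

/-- `(G, φ, (g_j)_{j ∈ ι})` is an expansion group over the index set `ι`: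
`φ(g_j) = e_j`, `ker φ` is an elementary abelian `2`-group, `[G,G] = ker φ`,
and the `g_j` are involutions. -/
structure IsExpGroup {ι : Type} [DecidableEq ι] {G : Type} [Group G]
    (φ : G →* Multiplicative (V ι)) (g : ι → G) : Prop where
  phi_g : ∀ j, φ (g j) = Multiplicative.ofAdd (stdb j)
  ker_comm : ∀ a b : G, φ a = 1 → φ b = 1 → a * b = b * a
  ker_sq : ∀ a : G, φ a = 1 → a ^ 2 = 1
  comm_eq_ker : commutator G = φ.ker
  g_sq : ∀ j, g j ^ 2 = 1

/-- `augPow G k` is the subgroup `I^k·[G,G]` of `G`: the augmentation-ideal filtration of the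
`F2[G/[G,G]]`-module `[G,G]`, written multiplicatively.  (The augmentation ideal `I` is spanned
over `F2` by the elements `1 + s̄`, and `(1 + s̄)·m` corresponds to `m · (s m s⁻¹)`.) -/
def augPow (G : Type) [Group G] : ℕ → Subgroup G
  | 0 => commutator G
  | (k + 1) => Subgroup.closure {x | ∃ s : G, ∃ m ∈ augPow G k, x = m * (s * m * s⁻¹)}

/-- The `m`-th graded quotient `G^(m+1)/G^(m+2)` of the lower central series of `G`
(`(⊤ : Subgroup G).lowerCentralSeries m = G^(m+1)` in the paper's 1-based indexing). -/
def lcsQ (G : Type) [Group G] (m : ℕ) : Type :=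
  ↥((⊤ : Subgroup G).lowerCentralSeries m) ⧸
    (((⊤ : Subgroup G).lowerCentralSeries (m + 1)).subgroupOf ((⊤ : Subgroup G).lowerCentralSeries m))

set_option linter.unusedSectionVars false
section Aux
open scoped Pointwise
open scoped commutatorElement

variable {n : ℕ} {G : Type} [Group G] (φ : G →* Multiplicative (V (Fin n))) (g : Fin n → G)

lemma sqV (x : Multiplicative (V (Fin n))) : x * x = 1 := by
  have : Multiplicative.toAdd x + Multiplicative.toAdd x = 0 := by
    funext j
    have : ∀ z : ZMod 2, z + z = 0 := by decide
    exact this _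
  calc x * x = Multiplicative.ofAdd (Multiplicative.toAdd x + Multiplicative.toAdd x) := rfl
    _ = 1 := by rw [this]; rfl

lemma phi_comm_one (a b : G) : φ ⁅a, b⁆ = 1 := by
  rw [map_commutatorElement]
  exact commutatorElement_eq_one_iff_commute.mpr (mul_comm _ _)

/-- conjugation as a hom on the kernel -/
def bconj (s : G) : ↥φ.ker →* ↥φ.ker where
  toFun k := ⟨s * ↑k * s⁻¹, by
    have hk : φ (k : G) = 1 := k.2
    simp [MonoidHom.mem_ker, hk]⟩
  map_one' := by ext; simp
  map_mul' a b := by ext; show s * (↑a * ↑b) * s⁻¹ = s * ↑a * s⁻¹ * (s * ↑b * s⁻¹); group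

lemma bconj_coe (s : G) (k : ↥φ.ker) : (bconj φ s k : G) = s * ↑k * s⁻¹ := rfl

lemma bconj_bconj (s t : G) (k : ↥φ.ker) : bconj φ s (bconj φ t k) = bconj φ (s * t) k := by
  ext; show s * (t * ↑k * t⁻¹) * s⁻¹ = (s*t) * ↑k * (s*t)⁻¹; group

variable (h : IsExpGroup φ g)
include h

/-- the kernel is commutative -/
@[reducible]
def commKer : CommGroup ↥φ.ker :=
  { (inferInstance : Group ↥φ.ker) with
    mul_comm := fun a b => Subtype.ext (h.ker_comm _ _ a.2 b.2) }

lemma bconj_ker (c : G) (hc : φ c = 1) (k : ↥φ.ker) : bconj φ c k = k := by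
  ext
  show c * ↑k * c⁻¹ = ↑k
  rw [h.ker_comm c ↑k hc k.2]
  group

lemma sq_ker (k : ↥φ.ker) : k * k = 1 := by
  ext
  show (k : G) * ↑k = 1
  have := h.ker_sq ↑k k.2
  rwa [pow_two] at this

/-- the operator `k ↦ (1 + s)k` on the kernel -/
def ctil (s : G) (k : ↥φ.ker) : ↥φ.ker := bconj φ s k * k⁻¹

omit h in
lemma ctil_coe (s : G) (k : ↥φ.ker) : (ctil φ s k : G) = ⁅s, (k : G)⁆ := rfl

omit h in
lemma ctil_one (s : G) : ctil φ s 1 = 1 := by simp [ctil]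

lemma ctil_mul (s : G) (k k' : ↥φ.ker) :
    ctil φ s (k * k') = ctil φ s k * ctil φ s k' := by
  letI := commKer φ g h
  apply Additive.ofMul.injective
  simp only [ctil, map_mul, mul_inv, ofMul_mul, ofMul_inv]
  abel

lemma ctil_inv (s : G) (k : ↥φ.ker) : ctil φ s k⁻¹ = (ctil φ s k)⁻¹ := by
  letI := commKer φ g h
  apply Additive.ofMul.injective
  simp only [ctil, map_inv, mul_inv, inv_inv, ofMul_mul, ofMul_inv]

lemma ctil_mul_left (s t : G) (k : ↥φ.ker) :
    ctil φ (s * t) k = ctil φ s (ctil φ t k) * ctil φ s k * ctil φ t k := by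
  letI := commKer φ g h
  apply Additive.ofMul.injective
  simp only [ctil, map_mul, map_inv, mul_inv, inv_inv, bconj_bconj, ofMul_mul, ofMul_inv]
  abel

lemma ctil_ctil_self (s : G) (k : ↥φ.ker) : ctil φ s (ctil φ s k) = 1 := by
  letI := commKer φ g h
  have hss : φ (s * s) = 1 := by rw [map_mul]; exact sqV _
  have e : ctil φ s (ctil φ s k) = (k * (bconj φ s k)⁻¹) * (k * (bconj φ s k)⁻¹) := by
    apply Additive.ofMul.injective
    simp only [ctil, map_mul, map_inv, mul_inv, inv_inv, bconj_bconj,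
      bconj_ker φ g h (s*s) hss, ofMul_mul, ofMul_inv]
    abel
  rw [e, sq_ker φ g h]

lemma bconj_mul_comm (a b : G) (k : ↥φ.ker) :
    bconj φ (a * b) k = bconj φ (b * a) k := by
  have hc : φ ((b*a)⁻¹ * (a*b)) = 1 := by
    rw [map_mul, map_inv]
    have : φ (b*a) = φ (a*b) := by rw [map_mul, map_mul, mul_comm]
    rw [this, inv_mul_cancel]
  have : a * b = (b * a) * ((b*a)⁻¹ * (a*b)) := by group
  rw [this, ← bconj_bconj, bconj_ker φ g h _ hc]

lemma ctil_comm (a b : G) (k : ↥φ.ker) :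
    ctil φ a (ctil φ b k) = ctil φ b (ctil φ a k) := by
  letI := commKer φ g h
  apply Additive.ofMul.injective
  simp only [ctil, map_mul, map_inv, mul_inv, inv_inv, bconj_bconj,
    bconj_mul_comm φ g h a b, ofMul_mul, ofMul_inv]
  abel

lemma ctil_ker_right (s c : G) (hc : φ c = 1) (k : ↥φ.ker) :
    ctil φ (s * c) k = ctil φ s k := by
  simp only [ctil, ← bconj_bconj, bconj_ker φ g h c hc]



omit h in
lemma stdb_self_add (i : Fin n) : stdb (ι := Fin n) i + stdb i = 0 := by
  funext j
  simp only [Pi.add_apply, Pi.zero_apply]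
  by_cases e : i = j
  · subst e
    rw [stdb, Pi.single_eq_same]
    decide
  · simp [stdb, Pi.single_eq_of_ne (Ne.symm e)]

def Vsupp (v : V (Fin n)) : Finset (Fin n) := Finset.univ.filter fun i => v i = 1

omit h in
lemma sum_supp (v : V (Fin n)) : (∑ i ∈ Vsupp v, stdb (ι := Fin n) i) = v := by
  funext j
  rw [Finset.sum_apply]
  by_cases hj : v j = 1
  · rw [Finset.sum_eq_single_of_mem j (by simp [Vsupp, hj])]
    · simp [stdb, hj]
    · intro i _ hij
      simp [stdb, Pi.single_eq_of_ne (Ne.symm hij)]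
  · have hv : v j = 0 := by
      have : ∀ z : ZMod 2, z ≠ 1 → z = 0 := by decide
      exact this _ hj
    rw [hv]
    apply Finset.sum_eq_zero
    intro i hi
    simp only [Vsupp, Finset.mem_filter] at hi
    have hij : i ≠ j := fun e => hj (e ▸ hi.2)
    simp [stdb, Pi.single_eq_of_ne (Ne.symm hij)]

def tmap (v : V (Fin n)) : G := (((Vsupp v).sort (· ≤ ·)).reverse.map g).prod

omit h in
lemma tmap_mem (v : V (Fin n)) (H : Subgroup G) (hg : ∀ i, g i ∈ H) : tmap g v ∈ H := by
  apply H.list_prod_mem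
  intro x hx
  rcases List.mem_map.mp hx with ⟨i, _, rfl⟩
  exact hg i

lemma phi_tmap (v : V (Fin n)) : φ (tmap g v) = Multiplicative.ofAdd v := by
  unfold tmap
  rw [map_list_prod, List.map_map]
  have h1 : (List.map (φ ∘ g) (((Vsupp v).sort (· ≤ ·)).reverse)).prod
      = (List.map (fun i => Multiplicative.ofAdd (stdb (ι := Fin n) i)) (((Vsupp v).sort (· ≤ ·)).reverse)).prod := by
    congr 1
    apply List.map_congr_left
    intro i _
    exact h.phi_g i
  rw [h1, List.map_reverse, List.prod_reverse]
  have h2 : (List.map (fun i => Multiplicative.ofAdd (stdb (ι := Fin n) i)) ((Vsupp v).sort (· ≤ ·))).prod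
      = ∏ i ∈ Vsupp v, Multiplicative.ofAdd (stdb (ι := Fin n) i) := by
    rw [← Finset.prod_map_toList]
    exact List.Perm.prod_eq (List.Perm.map _ (Finset.sort_perm_toList _ _))
  rw [h2, ← ofAdd_sum, sum_supp]

omit h in
lemma tmap_zero : tmap (n := n) g 0 = 1 := by
  have : Vsupp (0 : V (Fin n)) = ∅ := by
    ext i
    simp [Vsupp]
  simp [tmap, this]

omit h in
lemma Vsupp_add_single (v : V (Fin n)) (i : Fin n) (hvi : v i = 0) :
    Vsupp (v + stdb i) = insert i (Vsupp v) := by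
  ext j
  simp only [Vsupp, Finset.mem_filter, Finset.mem_univ, true_and, Finset.mem_insert]
  by_cases e : i = j
  · subst e
    simp [stdb, Pi.add_apply, hvi]
  · have : (v + stdb i) j = v j := by
      simp [stdb, Pi.add_apply, Pi.single_eq_of_ne (Ne.symm e)]
    rw [this]
    constructor
    · exact Or.inr
    · rintro (rfl | hj)
      · exact absurd rfl e
      · exact hj

omit h in
lemma tmap_step (v : V (Fin n)) (i : Fin n) (hvi : v i = 0) (hlt : ∀ j, v j = 1 → i < j) :
    tmap g (v + stdb i) = tmap g v * g i := by
  have hnm : i ∉ Vsupp v := by simp [Vsupp, hvi]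
  have hsort : (Vsupp (v + stdb i)).sort (· ≤ ·) = i :: (Vsupp v).sort (· ≤ ·) := by
    rw [Vsupp_add_single v i hvi]
    exact Finset.sort_insert _ (fun b hb => le_of_lt (hlt b (by simpa [Vsupp] using hb))) hnm
  unfold tmap
  rw [hsort]
  simp

/-- iterated commutator operators -/
def cS (L : List (Fin n)) (k : ↥φ.ker) : ↥φ.ker := L.foldr (fun i x => ctil φ (g i) x) k

omit h in
lemma cS_cons (i : Fin n) (L : List (Fin n)) (k : ↥φ.ker) :
    cS φ g (i :: L) k = ctil φ (g i) (cS φ g L k) := rfl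

omit h in
lemma cS_one (L : List (Fin n)) : cS φ g L 1 = 1 := by
  induction L with
  | nil => rfl
  | cons i L ih => rw [cS_cons, ih, ctil_one]

lemma ctil_cS (s : G) (L : List (Fin n)) (k : ↥φ.ker) :
    ctil φ s (cS φ g L k) = cS φ g L (ctil φ s k) := by
  induction L with
  | nil => rfl
  | cons i L ih => rw [cS_cons, ctil_comm φ g h, ih, cS_cons]

lemma cS_dup (i : Fin n) (L : List (Fin n)) (k : ↥φ.ker) (hiL : i ∈ L) :
    cS φ g (i :: L) k = 1 := by
  induction L with
  | nil => cases hiL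
  | cons j L ih =>
    rcases List.mem_cons.mp hiL with rfl | hiL'
    · rw [cS_cons, cS_cons, ctil_ctil_self φ g h]
    · rw [cS_cons, cS_cons, ctil_comm φ g h, ← cS_cons φ g i, ih hiL', ctil_one]

def Cset (m : ℕ) : Set G :=
  {x | ∃ L : List (Fin n), ∃ k : ↥φ.ker, L.Nodup ∧ m ≤ L.length ∧ x = ↑(cS φ g L k)}

def AA (m : ℕ) : Subgroup G := Subgroup.closure (Cset φ g m)

omit h in
lemma Cset_ker {m : ℕ} {x : G} (hx : x ∈ Cset φ g m) : x ∈ φ.ker := by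
  obtain ⟨L, k, _, _, rfl⟩ := hx
  exact (cS φ g L k).2

omit h in
lemma AA_le_ker (m : ℕ) : AA φ g m ≤ φ.ker :=
  (Subgroup.closure_le _).mpr fun _ hx => Cset_ker φ g hx

omit h in
lemma AA_succ_le (m : ℕ) : AA φ g (m + 1) ≤ AA φ g m :=
  Subgroup.closure_mono (fun x => by
    rintro ⟨L, k, nd, hl, rfl⟩
    exact ⟨L, k, nd, le_trans (Nat.le_succ m) hl, rfl⟩)

lemma gstep {m : ℕ} (i : Fin n) {x : G} (hx : x ∈ Cset φ g m) :
    ⁅g i, x⁆ ∈ AA φ g (m + 1) := by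
  obtain ⟨L, k, nd, hl, rfl⟩ := hx
  have hcoe : ⁅g i, (cS φ g L k : G)⁆ = ↑(cS φ g (i :: L) k) := rfl
  rw [hcoe]
  by_cases hiL : i ∈ L
  · rw [cS_dup φ g h i L k hiL]
    exact one_mem _
  · exact Subgroup.subset_closure
      ⟨i :: L, k, List.nodup_cons.mpr ⟨hiL, nd⟩, by simpa using Nat.succ_le_succ hl, rfl⟩

lemma comm_ker_mul (s x y : G) (hx : x ∈ φ.ker) (hy : y ∈ φ.ker) :
    ⁅s, x * y⁆ = ⁅s, x⁆ * ⁅s, y⁆ := by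
  have := congrArg (fun z : ↥φ.ker => (z : G)) (ctil_mul φ g h s ⟨x, hx⟩ ⟨y, hy⟩)
  exact this

lemma comm_ker_inv (s x : G) (hx : x ∈ φ.ker) : ⁅s, x⁻¹⁆ = ⁅s, x⁆⁻¹ := by
  have := congrArg (fun z : ↥φ.ker => (z : G)) (ctil_inv φ g h s ⟨x, hx⟩)
  exact this

lemma comm_mul_left' (s t x : G) (hx : x ∈ φ.ker) :
    ⁅s * t, x⁆ = ⁅s, ⁅t, x⁆⁆ * ⁅s, x⁆ * ⁅t, x⁆ := by
  have := congrArg (fun z : ↥φ.ker => (z : G)) (ctil_mul_left φ g h s t ⟨x, hx⟩)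
  exact this

lemma stab (q : ℕ) (i : Fin n) {x : G} (hx : x ∈ AA φ g q) :
    ⁅g i, x⁆ ∈ AA φ g q := by
  refine (Subgroup.closure_induction
    (p := fun x _ => x ∈ φ.ker ∧ ⁅g i, x⁆ ∈ AA φ g q) ?_ ?_ ?_ ?_ hx).2
  · intro x hxm
    exact ⟨Cset_ker φ g hxm, AA_succ_le φ g q (gstep φ g h i hxm)⟩
  · exact ⟨one_mem _, by rw [commutatorElement_one_right]; exact one_mem _⟩
  · intro x y _ _ ⟨hx1, hx2⟩ ⟨hy1, hy2⟩
    exact ⟨mul_mem hx1 hy1, by rw [comm_ker_mul φ g h _ _ _ hx1 hy1]; exact mul_mem hx2 hy2⟩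
  · intro x _ ⟨hx1, hx2⟩
    exact ⟨inv_mem hx1, by rw [comm_ker_inv φ g h _ _ hx1]; exact inv_mem hx2⟩

lemma Wlem (m : ℕ) (L : List (Fin n)) (x : G) (hx : x ∈ φ.ker)
    (hyp : ∀ i, ⁅g i, x⁆ ∈ AA φ g (m + 1)) :
    ⁅(L.map g).prod, x⁆ ∈ AA φ g (m + 1) := by
  induction L with
  | nil => rw [List.map_nil, List.prod_nil, commutatorElement_one_left]; exact one_mem _
  | cons i L ih =>
    rw [List.map_cons, List.prod_cons, comm_mul_left' φ g h _ _ _ hx]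
    exact mul_mem (mul_mem (stab φ g h (m+1) i ih) (hyp i)) ih

lemma comm_eq_tmap (s x : G) (hx : x ∈ φ.ker) :
    ⁅s, x⁆ = ⁅tmap g (Multiplicative.toAdd (φ s)), x⁆ := by
  set t := tmap g (Multiplicative.toAdd (φ s)) with ht
  have hφt : φ t = φ s := by rw [ht, phi_tmap φ g h]; rfl
  have hc : φ (t⁻¹ * s) = 1 := by rw [map_mul, map_inv, hφt, inv_mul_cancel]
  have hs : s = t * (t⁻¹ * s) := by group
  conv_lhs => rw [hs]
  have := congrArg (fun z : ↥φ.ker => (z : G)) (ctil_ker_right φ g h t (t⁻¹ * s) hc ⟨x, hx⟩)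
  exact this

lemma mainlem (m : ℕ) {x : G} (hx : x ∈ AA φ g m) (s : G) :
    ⁅s, x⁆ ∈ AA φ g (m + 1) := by
  refine (Subgroup.closure_induction
    (p := fun x _ => x ∈ φ.ker ∧ ∀ s, ⁅s, x⁆ ∈ AA φ g (m+1)) ?_ ?_ ?_ ?_ hx).2 s
  · intro x hxm
    refine ⟨Cset_ker φ g hxm, fun s => ?_⟩
    rw [comm_eq_tmap φ g h s x (Cset_ker φ g hxm)]
    apply Wlem φ g h m _ x (Cset_ker φ g hxm)
    intro i
    exact gstep φ g h i hxm
  · exact ⟨one_mem _, fun s => by rw [commutatorElement_one_right]; exact one_mem _⟩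
  · intro x y _ _ ⟨hx1, hx2⟩ ⟨hy1, hy2⟩
    exact ⟨mul_mem hx1 hy1, fun s => by
      rw [comm_ker_mul φ g h _ _ _ hx1 hy1]; exact mul_mem (hx2 s) (hy2 s)⟩
  · intro x _ ⟨hx1, hx2⟩
    exact ⟨inv_mem hx1, fun s => by
      rw [comm_ker_inv φ g h _ _ hx1]; exact inv_mem (hx2 s)⟩

lemma lcs_le : ∀ m, (⊤ : Subgroup G).lowerCentralSeries (m + 1) ≤ AA φ g m := by
  intro m
  induction m with
  | zero =>
    rw [Subgroup.top_lowerCentralSeries_one, h.comm_eq_ker]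
    intro x hx
    exact Subgroup.subset_closure ⟨[], ⟨x, hx⟩, List.nodup_nil, le_refl 0, rfl⟩
  | succ m ih =>
    have hrfl : (⊤ : Subgroup G).lowerCentralSeries (m+2) = ⁅(⊤ : Subgroup G).lowerCentralSeries (m+1), (⊤ : Subgroup G)⁆ := rfl
    rw [hrfl, Subgroup.commutator_le]
    intro x hxm s _
    rw [← commutatorElement_inv]
    exact inv_mem (mainlem φ g h m (ih hxm) s)

lemma lcs_bot : (⊤ : Subgroup G).lowerCentralSeries (n + 2) = ⊥ := by
  have hC : Cset φ g (n + 1) = ∅ := by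
    ext x
    simp only [Cset, Set.mem_setOf_eq, Set.mem_empty_iff_false, iff_false]
    rintro ⟨L, k, nd, hl, rfl⟩
    have := nd.length_le_card
    simp at this
    omega
  have : AA φ g (n + 1) = ⊥ := by
    rw [AA, hC, Subgroup.closure_empty]
  exact le_bot_iff.mp (this ▸ lcs_le φ g h (n + 1))



omit h in
lemma comm_central {Q : Type} [Group Q] (A B u u' : Q)
    (hu : ∀ z, u * z = z * u) (hu' : ∀ z, u' * z = z * u') :
    ⁅A * u, B * u'⁆ = ⁅A, B⁆ := by
  rw [commutatorElement_def, commutatorElement_def]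
  calc (A*u)*(B*u')*(A*u)⁻¹*(B*u')⁻¹
      = A*(u*(B*u'))*u⁻¹*A⁻¹*(u'⁻¹*B⁻¹) := by group
    _ = A*((B*u')*u)*u⁻¹*A⁻¹*(u'⁻¹*B⁻¹) := by rw [hu (B*u')]
    _ = A*B*(u'*A⁻¹)*u'⁻¹*B⁻¹ := by group
    _ = A*B*(A⁻¹*u')*u'⁻¹*B⁻¹ := by rw [← hu' A⁻¹]
    _ = A*B*A⁻¹*B⁻¹ := by group

lemma decomp (M : Subgroup G) (hH : Subgroup.closure (Set.range g) ≤ M)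
    (hK : φ.ker ≤ M) : ∀ a : G, a ∈ M := by
  intro a
  have h1 : tmap g (Multiplicative.toAdd (φ a)) ∈ M :=
    tmap_mem g _ M (fun i => hH (Subgroup.subset_closure (Set.mem_range_self i)))
  have h2 : (tmap g (Multiplicative.toAdd (φ a)))⁻¹ * a ∈ φ.ker := by
    have := phi_tmap φ g h (Multiplicative.toAdd (φ a))
    simp [MonoidHom.mem_ker, this]
  have : a = tmap g (Multiplicative.toAdd (φ a)) * ((tmap g (Multiplicative.toAdd (φ a)))⁻¹ * a) := by
    group
  rw [this]
  exact mul_mem h1 (hK h2)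

lemma gen_top : Subgroup.closure (Set.range g) = ⊤ := by
  set H := Subgroup.closure (Set.range g) with hH
  have main : ∀ m, (⊤ : Subgroup G) ≤ H ⊔ (⊤ : Subgroup G).lowerCentralSeries (m+1) := by
    intro m
    induction m with
    | zero =>
      intro a _
      apply decomp φ g h _ le_sup_left _ a
      rw [← h.comm_eq_ker]
      exact le_sup_right
    | succ m ih =>
      set M := H ⊔ (⊤ : Subgroup G).lowerCentralSeries (m+2) with hM
      intro a _
      apply decomp φ g h M le_sup_left _ a
      rw [← h.comm_eq_ker, commutator_def, Subgroup.commutator_le]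
      intro x _ y _
      -- decompose x and y
      have hx : x ∈ (H : Set G) * ((⊤ : Subgroup G).lowerCentralSeries (m+1) : Set G) := by
        rw [← Subgroup.mul_normal]
        exact ih (Subgroup.mem_top x)
      have hy : y ∈ (H : Set G) * ((⊤ : Subgroup G).lowerCentralSeries (m+1) : Set G) := by
        rw [← Subgroup.mul_normal]
        exact ih (Subgroup.mem_top y)
      obtain ⟨a1, ha1, b1, hb1, rfl⟩ := hx
      obtain ⟨a2, ha2, b2, hb2, rfl⟩ := hy
      set π := QuotientGroup.mk' ((⊤ : Subgroup G).lowerCentralSeries (m+2)) with hπ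
      have hcen : ∀ b ∈ (⊤ : Subgroup G).lowerCentralSeries (m+1), ∀ z, π b * z = z * π b := by
        intro b hb z
        obtain ⟨c, rfl⟩ := QuotientGroup.mk'_surjective _ z
        have hmem : ⁅b, c⁆ ∈ (⊤ : Subgroup G).lowerCentralSeries (m+2) := by
          have : ⁅b, c⁆ ∈ ⁅(⊤ : Subgroup G).lowerCentralSeries (m+1), (⊤ : Subgroup G)⁆ :=
            Subgroup.commutator_mem_commutator hb (Subgroup.mem_top c)
          exact this
        have h1 : π ⁅b, c⁆ = 1 := by
          rw [← MonoidHom.mem_ker, QuotientGroup.ker_mk']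
          exact hmem
        rw [map_commutatorElement] at h1
        exact (commutatorElement_eq_one_iff_commute.mp h1).eq
      have key : π ⁅a1 * b1, a2 * b2⁆ = π ⁅a1, a2⁆ := by
        rw [map_commutatorElement, map_commutatorElement, map_mul, map_mul]
        exact comm_central _ _ _ _ (hcen b1 hb1) (hcen b2 hb2)
      have hz : ⁅a1, a2⁆⁻¹ * ⁅a1 * b1, a2 * b2⁆ ∈ (⊤ : Subgroup G).lowerCentralSeries (m+2) := by
        rw [← QuotientGroup.ker_mk' ((⊤ : Subgroup G).lowerCentralSeries (m+2)), MonoidHom.mem_ker, map_mul,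
          map_inv, key]
        exact inv_mul_cancel _
      have hcm : ⁅a1, a2⁆ ∈ H := by
        rw [commutatorElement_def]
        exact mul_mem (mul_mem (mul_mem ha1 ha2) (inv_mem ha1)) (inv_mem ha2)
      have : ⁅a1 * b1, a2 * b2⁆ = ⁅a1, a2⁆ * (⁅a1, a2⁆⁻¹ * ⁅a1 * b1, a2 * b2⁆) := by group
      rw [this]
      exact mul_mem (Subgroup.mem_sup_left hcm) (Subgroup.mem_sup_right hz)
  have := main (n + 1)
  rw [lcs_bot φ g h, sup_bot_eq] at this
  exact le_antisymm le_top this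



omit h in
lemma zmod_ne_one {z : ZMod 2} (hz : ¬ z = 1) : z = 0 := by revert hz; revert z; decide

def uu (v : V (Fin n)) (i : Fin n) : G := tmap g v * g i * (tmap g (v + stdb i))⁻¹

omit h in
lemma add_stdb_apply_self (v : V (Fin n)) (i : Fin n) : (v + stdb i) i = v i + 1 := by
  simp [stdb, Pi.add_apply]

omit h in
lemma add_stdb_apply_ne (v : V (Fin n)) (i j : Fin n) (hij : i ≠ j) : (v + stdb i) j = v j := by
  simp [stdb, Pi.add_apply, Pi.single_eq_of_ne (Ne.symm hij)]

omit h in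
lemma add_stdb_add_stdb (v : V (Fin n)) (i : Fin n) : v + stdb i + stdb i = v := by
  rw [add_assoc, stdb_self_add, add_zero]

lemma phi_uu (v : V (Fin n)) (i : Fin n) : φ (uu g v i) = 1 := by
  rw [uu, map_mul, map_mul, map_inv, phi_tmap φ g h, phi_tmap φ g h, h.phi_g i]
  rw [← ofAdd_add]
  group

lemma uu_pair (v : V (Fin n)) (i : Fin n) : uu g v i * uu g (v + stdb i) i = 1 := by
  unfold uu
  rw [add_stdb_add_stdb]
  have hg : g i * g i = 1 := by rw [← pow_two]; exact h.g_sq i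
  calc tmap g v * g i * (tmap g (v + stdb i))⁻¹ * (tmap g (v + stdb i) * g i * (tmap g v)⁻¹)
      = tmap g v * (g i * g i) * (tmap g v)⁻¹ := by group
    _ = 1 := by rw [hg]; group

omit h in
lemma uu_triv (v : V (Fin n)) (i : Fin n) (hvi : v i = 0) (hlt : ∀ j, v j = 1 → i < j) :
    uu g v i = 1 := by
  unfold uu
  rw [tmap_step g v i hvi hlt]
  group

def uCond (v : V (Fin n)) (i : Fin n) : Prop := v i = 1 ∧ ∃ j, v j = 1 ∧ j < i

def uSet : Set G := {x | ∃ v : V (Fin n), ∃ i : Fin n, uCond v i ∧ x = uu g v i}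

lemma red (v : V (Fin n)) (i : Fin n) : uu g v i ∈ Subgroup.closure (uSet g) := by
  by_cases hj : ∃ j, v j = 1 ∧ j < i
  · by_cases hvi : v i = 1
    · exact Subgroup.subset_closure ⟨v, i, ⟨hvi, hj⟩, rfl⟩
    · have hvi0 : v i = 0 := zmod_ne_one hvi
      have hpair : uu g v i = (uu g (v + stdb i) i)⁻¹ :=
        eq_inv_of_mul_eq_one_left (uu_pair φ g h v i)
      rw [hpair]
      apply inv_mem
      apply Subgroup.subset_closure
      obtain ⟨j, hj1, hj2⟩ := hj
      have hji : j ≠ i := fun e => by rw [e, hvi0] at hj1; exact absurd hj1 (by decide)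
      refine ⟨v + stdb i, i, ⟨?_, ⟨j, ?_, hj2⟩⟩, rfl⟩
      · rw [add_stdb_apply_self, hvi0]; decide
      · rw [add_stdb_apply_ne v i j (Ne.symm hji)]; exact hj1
  · push_neg at hj
    by_cases hvi : v i = 1
    · have hw : uu g (v + stdb i) i = 1 := by
        apply uu_triv
        · rw [add_stdb_apply_self, hvi]; decide
        · intro j hjw
          by_cases e : i = j
          · exfalso
            rw [← e, add_stdb_apply_self, hvi] at hjw
            exact absurd hjw (by decide)
          · rw [add_stdb_apply_ne v i j e] at hjw
            exact lt_of_le_of_ne (le_of_not_gt (by simpa using hj j hjw)) e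
    -- hj j hjw : ¬ j < i means i ≤ j
      have hpair := uu_pair φ g h v i
      rw [hw, mul_one] at hpair
      rw [hpair]
      exact one_mem _
    · have hvi0 : v i = 0 := zmod_ne_one hvi
      rw [uu_triv g v i hvi0 (fun j hj1 => lt_of_le_of_ne (le_of_not_gt (by simpa using hj j hj1))
        (fun e => hvi (e ▸ hj1)))]
      exact one_mem _

lemma schreier {a : G} (ha : a ∈ Subgroup.closure (Set.range g)) :
    ∀ v : V (Fin n), ∃ c ∈ Subgroup.closure (uSet g),
      tmap g v * a = c * tmap g (v + Multiplicative.toAdd (φ a)) := by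
  refine Subgroup.closure_induction
    (p := fun a _ => ∀ v : V (Fin n), ∃ c ∈ Subgroup.closure (uSet g),
      tmap g v * a = c * tmap g (v + Multiplicative.toAdd (φ a))) ?_ ?_ ?_ ?_ ha
  · rintro x ⟨i, rfl⟩ v
    refine ⟨uu g v i, red φ g h v i, ?_⟩
    rw [h.phi_g i]
    show tmap g v * g i = uu g v i * tmap g (v + stdb i)
    unfold uu
    group
  · intro v
    refine ⟨1, one_mem _, ?_⟩
    simp
  · intro x y _ _ px py
    intro v
    obtain ⟨c, hc, hcx⟩ := px v
    obtain ⟨c', hc', hcy⟩ := py (v + Multiplicative.toAdd (φ x))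
    refine ⟨c * c', mul_mem hc hc', ?_⟩
    rw [map_mul, toAdd_mul, ← add_assoc, ← mul_assoc, hcx, mul_assoc, hcy]
    group
  · intro x _ px
    intro v
    obtain ⟨c, hc, hcx⟩ := px (v + Multiplicative.toAdd (φ x⁻¹))
    refine ⟨c⁻¹, inv_mem hc, ?_⟩
    have hv : v + Multiplicative.toAdd (φ x⁻¹) + Multiplicative.toAdd (φ x) = v := by
      rw [add_assoc, ← toAdd_mul, map_inv, inv_mul_cancel]
      simp
    rw [hv] at hcx
    have hres : tmap g v = c⁻¹ * (tmap g (v + Multiplicative.toAdd (φ x⁻¹)) * x) := by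
      rw [hcx]; group
    rw [hres]
    group

lemma ker_le_uclosure : φ.ker ≤ Subgroup.closure (uSet g) := by
  intro x hx
  have hx' : x ∈ Subgroup.closure (Set.range g) := by
    rw [gen_top φ g h]
    exact Subgroup.mem_top x
  obtain ⟨c, hc, hcx⟩ := schreier φ g h hx' 0
  rw [tmap_zero, one_mul] at hcx
  have hφx : Multiplicative.toAdd (φ x) = 0 := by
    rw [MonoidHom.mem_ker] at hx
    rw [hx]
    rfl
  rw [hφx, add_zero, tmap_zero, mul_one] at hcx
  rwa [hcx]



abbrev idx (n : ℕ) : Type := {p : V (Fin n) × Fin n // p.1 p.2 = 1 ∧ ∃ j, p.1 j = 1 ∧ j < p.2}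

def FF (ε : idx n → ZMod 2) : ↥φ.ker :=
  letI := commKer φ g h
  ∏ p : idx n,
    (⟨uu g p.1.1 p.1.2, MonoidHom.mem_ker.mpr (phi_uu φ g h _ _)⟩ : ↥φ.ker) ^ (ε p).val

lemma pow_mod_two (x : ↥φ.ker) (a : ℕ) : x ^ a = x ^ (a % 2) := by
  have hx : x ^ 2 = 1 := by rw [pow_two]; exact sq_ker φ g h x
  conv_lhs => rw [← Nat.div_add_mod a 2]
  rw [pow_add, pow_mul, hx, one_pow, one_mul]

lemma FF_mul (ε δ : idx n → ZMod 2) : FF φ g h (ε + δ) = FF φ g h ε * FF φ g h δ := by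
  letI := commKer φ g h
  unfold FF
  rw [← Finset.prod_mul_distrib]
  apply Finset.prod_congr rfl
  intro p _
  rw [← pow_add, Pi.add_apply, ZMod.val_add, ← pow_mod_two φ g h]

lemma FF_single (p₀ : idx n) :
    (FF φ g h (Pi.single p₀ 1) : G) = uu g p₀.1.1 p₀.1.2 := by
  letI := commKer φ g h
  unfold FF
  rw [Finset.prod_eq_single p₀]
  · rw [Pi.single_eq_same]
    have h1 : (1 : ZMod 2).val = 1 := rfl
    rw [h1, pow_one]
  · intro b _ hb
    rw [Pi.single_eq_of_ne hb]
    have h0 : (0 : ZMod 2).val = 0 := rfl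
    rw [h0, pow_zero]
  · intro hh
    exact absurd (Finset.mem_univ p₀) hh

lemma FF_zero : FF φ g h 0 = 1 := by
  letI := commKer φ g h
  unfold FF
  apply Finset.prod_eq_one
  intro p _
  have h0 : ((0 : idx n → ZMod 2) p).val = 0 := rfl
  rw [h0, pow_zero]

lemma uclosure_le_ker : Subgroup.closure (uSet g) ≤ φ.ker := by
  refine (Subgroup.closure_le _).mpr ?_
  rintro x ⟨v, i, _, rfl⟩
  exact MonoidHom.mem_ker.mpr (phi_uu φ g h v i)

lemma ker_surj : Function.Surjective (FF φ g h) := by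
  intro x
  have hx := ker_le_uclosure φ g h x.2
  have key : ∀ y (_ : y ∈ Subgroup.closure (uSet g)), ∃ ε, (↑(FF φ g h ε) : G) = y := by
    intro y hy
    refine Subgroup.closure_induction (p := fun y _ => ∃ ε, (↑(FF φ g h ε) : G) = y)
      ?_ ?_ ?_ ?_ hy
    · rintro z ⟨v, i, hcond, rfl⟩
      exact ⟨Pi.single (⟨(v, i), hcond⟩ : idx n) 1, FF_single φ g h _⟩
    · exact ⟨0, by rw [FF_zero φ g h]; rfl⟩
    · rintro a b _ _ ⟨ε, hε⟩ ⟨δ, hδ⟩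
      refine ⟨ε + δ, ?_⟩
      rw [FF_mul φ g h]
      push_cast
      rw [hε, hδ]
    · rintro a ha ⟨ε, hε⟩
      refine ⟨ε, ?_⟩
      have haK : a ∈ φ.ker := uclosure_le_ker φ g h ha
      have h2 : a * a = 1 := by
        have := h.ker_sq a (MonoidHom.mem_ker.mp haK)
        rwa [pow_two] at this
      rw [show a⁻¹ = a from inv_eq_of_mul_eq_one_left h2, hε]
  obtain ⟨ε, hε⟩ := key ↑x hx
  exact ⟨ε, Subtype.ext hε⟩

lemma card_ker_le : Nat.card ↥φ.ker ≤ 2 ^ Fintype.card (idx n) := by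
  calc Nat.card ↥φ.ker ≤ Nat.card (idx n → ZMod 2) :=
        Nat.card_le_card_of_surjective _ (ker_surj φ g h)
    _ = 2 ^ Fintype.card (idx n) := by
        rw [Nat.card_eq_fintype_card, Fintype.card_fun,
          show Fintype.card (ZMod 2) = 2 from rfl]



omit h in
lemma zmod_ne_zero {z : ZMod 2} (hz : ¬ z = 0) : z = 1 := by revert hz; revert z; decide

omit h in
lemma card_fiber_eq (i : Fin n) :
    (Finset.univ.filter fun v : V (Fin n) => v i = 1).card = 2 ^ (n - 1) := by
  have hbij : (Finset.univ.filter fun v : V (Fin n) => v i = 1).card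
      = (Finset.univ.filter fun v : V (Fin n) => ¬ v i = 1).card := by
    apply Finset.card_bij' (fun v _ => v + stdb i) (fun v _ => v + stdb i)
    · intro v hv
      simp only [Finset.mem_filter, Finset.mem_univ, true_and] at hv ⊢
      rw [add_stdb_apply_self, hv]
      decide
    · intro v hv
      simp only [Finset.mem_filter, Finset.mem_univ, true_and] at hv ⊢
      rw [add_stdb_apply_self, zmod_ne_one hv]
      decide
    · intro v _
      exact add_stdb_add_stdb v i
    · intro v _
      exact add_stdb_add_stdb v i
  have htot := Finset.card_filter_add_card_filter_not
    (s := (Finset.univ : Finset (V (Fin n)))) (p := fun v => v i = 1)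
  have hcard : (Finset.univ : Finset (V (Fin n))).card = 2 ^ n := by
    rw [Finset.card_univ]
    rw [show (Fintype.card (V (Fin n))) = 2 ^ n by simp [Fintype.card_fun]]
  have hiz : 0 < n := lt_of_le_of_lt (Nat.zero_le _) i.2
  have h1 : n - 1 + 1 = n := Nat.sub_add_cancel hiz
  have hpow : 2 ^ n = 2 * 2 ^ (n - 1) := by
    calc 2 ^ n = 2 ^ (n - 1 + 1) := by rw [h1]
      _ = 2 * 2 ^ (n - 1) := by rw [pow_succ]; ring
  set a := (Finset.univ.filter fun v : V (Fin n) => v i = 1).card with ha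
  set b := (Finset.univ.filter fun v : V (Fin n) => ¬ v i = 1).card with hb
  clear_value a b
  clear ha hb
  rw [hcard] at htot
  omega

omit h in
lemma sum_supp_card : (∑ v : V (Fin n), (Vsupp v).card) = n * 2 ^ (n - 1) := by
  have h1 : ∀ v : V (Fin n), (Vsupp v).card = ∑ i : Fin n, if v i = 1 then 1 else 0 := by
    intro v
    rw [Vsupp, Finset.card_filter]
  rw [Finset.sum_congr rfl (fun v _ => h1 v), Finset.sum_comm]
  have h2 : ∀ i : Fin n, (∑ v : V (Fin n), if v i = 1 then 1 else 0) = 2 ^ (n - 1) := by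
    intro i
    rw [← Finset.card_filter, card_fiber_eq]
  rw [Finset.sum_congr rfl (fun i _ => h2 i), Finset.sum_const, Finset.card_univ,
    Fintype.card_fin, smul_eq_mul]

omit h in
lemma card_nonzero : (Finset.univ.filter fun v : V (Fin n) => v ≠ 0).card = 2 ^ n - 1 := by
  have hzero : (Finset.univ.filter fun v : V (Fin n) => v = 0).card = 1 := by
    rw [Finset.filter_eq']
    simp
  have htot := Finset.card_filter_add_card_filter_not
    (s := (Finset.univ : Finset (V (Fin n)))) (p := fun v => v = 0)
  have hcard : (Finset.univ : Finset (V (Fin n))).card = 2 ^ n := by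
    rw [Finset.card_univ]
    rw [show (Fintype.card (V (Fin n))) = 2 ^ n by simp [Fintype.card_fun]]
  have : (Finset.univ.filter fun v : V (Fin n) => ¬ v = 0).card
      = (Finset.univ.filter fun v : V (Fin n) => v ≠ 0).card := rfl
  omega

omit h in
lemma cnt_le (v : V (Fin n)) :
    ((Finset.univ.filter fun i : Fin n => v i = 1 ∧ ∃ j, v j = 1 ∧ j < i).card)
      + (if v ≠ 0 then 1 else 0) ≤ (Vsupp v).card := by
  by_cases hv : v = 0
  · subst hv
    rw [if_neg (fun hne => hne rfl)]
    have hemp : (Finset.univ.filter fun i : Fin n => (0 : V (Fin n)) i = 1 ∧ ∃ j, (0 : V (Fin n)) j = 1 ∧ j < i) = ∅ := by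
      apply Finset.filter_false_of_mem
      intro i _
      rintro ⟨hi, -⟩
      rw [Pi.zero_apply] at hi
      exact absurd hi (by decide)
    rw [hemp]
    simp
  · rw [if_pos hv]
    have hne : (Vsupp v).Nonempty := by
      obtain ⟨i, hi⟩ := Function.ne_iff.mp hv
      exact ⟨i, by simp [Vsupp, zmod_ne_zero (by simpa using hi)]⟩
    have hsub : (Finset.univ.filter fun i : Fin n => v i = 1 ∧ ∃ j, v j = 1 ∧ j < i)
        ⊆ (Vsupp v).erase ((Vsupp v).min' hne) := by
      intro i hi
      simp only [Finset.mem_filter, Finset.mem_univ, true_and] at hi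
      obtain ⟨hi1, j, hj1, hjlt⟩ := hi
      apply Finset.mem_erase.mpr
      constructor
      · have : (Vsupp v).min' hne ≤ j := Finset.min'_le _ _ (by simp [Vsupp, hj1])
        exact ne_of_gt (lt_of_le_of_lt this hjlt)
      · simp [Vsupp, hi1]
    have h3 := Finset.card_le_card hsub
    rw [Finset.card_erase_of_mem (Finset.min'_mem _ hne)] at h3
    have h4 := Finset.Nonempty.card_pos hne
    omega

omit h in
lemma card_idx_bound (hn : 1 ≤ n) : Fintype.card (idx n) + 2 ^ n ≤ n * 2 ^ (n - 1) + 1 := by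
  have he : idx n ≃ Σ v : V (Fin n), {i : Fin n // v i = 1 ∧ ∃ j, v j = 1 ∧ j < i} :=
    Equiv.subtypeProdEquivSigmaSubtype (fun (v : V (Fin n)) (i : Fin n) => v i = 1 ∧ ∃ j, v j = 1 ∧ j < i)
  rw [Fintype.card_congr he, Fintype.card_sigma]
  have h1 : ∀ v : V (Fin n), Fintype.card {i : Fin n // v i = 1 ∧ ∃ j, v j = 1 ∧ j < i}
      = (Finset.univ.filter fun i : Fin n => v i = 1 ∧ ∃ j, v j = 1 ∧ j < i).card := by
    intro v
    rw [Fintype.card_subtype]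
  rw [Finset.sum_congr rfl (fun v _ => h1 v)]
  have key : (∑ v : V (Fin n),
      (Finset.univ.filter fun i : Fin n => v i = 1 ∧ ∃ j, v j = 1 ∧ j < i).card)
      + (2 ^ n - 1) ≤ n * 2 ^ (n - 1) := by
    calc (∑ v : V (Fin n),
        (Finset.univ.filter fun i : Fin n => v i = 1 ∧ ∃ j, v j = 1 ∧ j < i).card)
        + (2 ^ n - 1)
        = (∑ v : V (Fin n),
        (Finset.univ.filter fun i : Fin n => v i = 1 ∧ ∃ j, v j = 1 ∧ j < i).card)
        + (Finset.univ.filter fun v : V (Fin n) => v ≠ 0).card := by rw [card_nonzero]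
      _ = ∑ v : V (Fin n),
          (((Finset.univ.filter fun i : Fin n => v i = 1 ∧ ∃ j, v j = 1 ∧ j < i).card)
            + (if v ≠ 0 then 1 else 0)) := by
          rw [Finset.sum_add_distrib]
          congr 1
          rw [Finset.card_filter]
      _ ≤ ∑ v : V (Fin n), (Vsupp v).card := Finset.sum_le_sum (fun v _ => cnt_le v)
      _ = n * 2 ^ (n - 1) := sum_supp_card
  have hp : 1 ≤ 2 ^ n := Nat.one_le_two_pow
  set S := ∑ v : V (Fin n),
      (Finset.univ.filter fun i : Fin n => v i = 1 ∧ ∃ j, v j = 1 ∧ j < i).card with hS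
  set Q := n * 2 ^ (n - 1) with hQ
  clear_value S Q
  clear hS hQ h1 he
  omega

end Aux


/-- Every `n`-expansion group is a finite nilpotent `2`-group of order at most
`2^{n·2^{n−1} − 2^n + n + 1}`, generated by `{g_1,…,g_n}`, and its order is the product of the
cardinalities of the lower central series quotients. -/
theorem statement11 (n : ℕ) (hn : 1 ≤ n) (G : Type) [Group G]
    (φ : G →* Multiplicative (V (Fin n))) (g : Fin n → G) (h : IsExpGroup φ g) :
    Finite G ∧ Group.IsNilpotent G ∧ IsPGroup 2 G ∧
    Nat.card G ≤ 2 ^ (n * 2 ^ (n - 1) + n + 1 - 2 ^ n) ∧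
    Subgroup.closure (Set.range g) = ⊤ ∧
    (∀ N : ℕ, (⊤ : Subgroup G).lowerCentralSeries N = ⊥ →
      Nat.card G = ∏ m ∈ Finset.range N, Nat.card (lcsQ G m)) := by
  have hinj : Function.Injective (fun a : G =>
      ((φ a, (⟨(tmap g (Multiplicative.toAdd (φ a)))⁻¹ * a, by
        rw [MonoidHom.mem_ker, map_mul, map_inv, phi_tmap φ g h]
        simp⟩ : ↥φ.ker)) : Multiplicative (V (Fin n)) × ↥φ.ker)) := by
    intro a b hab
    simp only [Prod.mk.injEq, Subtype.mk.injEq] at hab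
    obtain ⟨h1, h2⟩ := hab
    rw [h1] at h2
    exact mul_left_cancel h2
  haveI hKfin : Finite ↥φ.ker := Finite.of_surjective _ (ker_surj φ g h)
  haveI hGfin : Finite G := Finite.of_injective _ hinj
  refine ⟨hGfin, ?_, ?_, ?_, gen_top φ g h, ?_⟩
  · exact Subgroup.nilpotent_iff_lowerCentralSeries.mpr ⟨n + 2, lcs_bot φ g h⟩
  · intro a
    refine ⟨2, ?_⟩
    have h2 : φ (a ^ 2) = 1 := by rw [map_pow, pow_two]; exact sqV _
    rw [show (2:ℕ)^2 = 2*2 from rfl, pow_mul]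
    exact h.ker_sq _ h2
  · calc Nat.card G ≤ Nat.card (Multiplicative (V (Fin n)) × ↥φ.ker) :=
          Nat.card_le_card_of_injective _ hinj
      _ = Nat.card (Multiplicative (V (Fin n))) * Nat.card ↥φ.ker := Nat.card_prod _ _
      _ ≤ 2 ^ n * 2 ^ Fintype.card (idx n) := by
          apply Nat.mul_le_mul
          · refine le_of_eq ?_
            rw [Nat.card_congr Multiplicative.toAdd, Nat.card_eq_fintype_card]
            simp [Fintype.card_fun]
          · exact card_ker_le φ g h
      _ = 2 ^ (n + Fintype.card (idx n)) := (pow_add 2 n _).symm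
      _ ≤ 2 ^ (n * 2 ^ (n - 1) + n + 1 - 2 ^ n) := by
          apply Nat.pow_le_pow_right (by norm_num)
          have hb := card_idx_bound (n := n) hn
          set c := Fintype.card (idx n) with hc
          clear_value c
          clear hc
          set P := 2 ^ n with hP
          set R := n * 2 ^ (n - 1) with hR
          clear_value P R
          clear hP hR
          omega
  · intro N hbot
    have key : ∀ M : ℕ, Nat.card G
        = (∏ m ∈ Finset.range M, Nat.card (lcsQ G m)) * Nat.card ↥((⊤ : Subgroup G).lowerCentralSeries M) := by
      intro M
      induction M with
      | zero =>
        rw [Finset.range_zero, Finset.prod_empty, one_mul, Subgroup.lowerCentralSeries_zero,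
          Subgroup.card_top]
      | succ M ih =>
        rw [ih, Finset.prod_range_succ]
        have hq : Nat.card ↥((⊤ : Subgroup G).lowerCentralSeries M)
            = Nat.card (lcsQ G M) * Nat.card ↥((⊤ : Subgroup G).lowerCentralSeries (M+1)) := by
          have h1 := Subgroup.card_eq_card_quotient_mul_card_subgroup
            (((⊤ : Subgroup G).lowerCentralSeries (M+1)).subgroupOf ((⊤ : Subgroup G).lowerCentralSeries M))
          have h2 : Nat.card ↥(((⊤ : Subgroup G).lowerCentralSeries (M+1)).subgroupOf ((⊤ : Subgroup G).lowerCentralSeries M))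
              = Nat.card ↥((⊤ : Subgroup G).lowerCentralSeries (M+1)) :=
            Nat.card_congr (Subgroup.subgroupOfEquivOfLe
              (Subgroup.lowerCentralSeries_antitone _ (Nat.le_succ M))).toEquiv
          rw [h2] at h1
          have h3 : Nat.card (lcsQ G M) = Nat.card (↥((⊤ : Subgroup G).lowerCentralSeries M) ⧸
              ((⊤ : Subgroup G).lowerCentralSeries (M+1)).subgroupOf ((⊤ : Subgroup G).lowerCentralSeries M)) := rfl
          rw [h3]
          exact h1
        rw [hq]
        ring
    rw [key N, hbot, Subgroup.card_bot, mul_one]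

end HigherGenus
end

section
/- Let (G, φ, (g_1,…,g_n)) and (G', φ', (g'_1,…,g'_n)) be n-expansion groups. Let G'' be the subgroup of G × G' generated by the elements g''_i := (g_i, g'_i) for i ∈ [n], and let φ'' : G'' → F2^n be the restriction to G'' of φ ∘ pr_1 (which agrees on G'' with φ' ∘ pr_2). Then (G'', φ'', (g''_1,…,g''_n)) is an n-expansion group. -/
namespace HigherGenus

variable {ι : Type} [Fintype ι] [DecidableEq ι]

private lemma pow_mod_two_s13 {M : Type} [Monoid M] {x : M} (hx : x ^ 2 = 1) (m : ℕ) :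
    x ^ m = x ^ (m % 2) := by
  conv_lhs => rw [← Nat.div_add_mod m 2]
  rw [pow_add, pow_mul, hx, one_pow, one_mul]

private lemma pow_val_add {M : Type} [Monoid M] {x : M} (hx : x ^ 2 = 1) (a b : ZMod 2) :
    x ^ (a + b).val = x ^ a.val * x ^ b.val := by
  rw [← pow_add, pow_mod_two_s13 hx ((a + b).val), pow_mod_two_s13 hx (a.val + b.val), ZMod.val_add]
  congr 1
  omega

/-- If a group is generated by involutions `g j` with `φ (g j) = e_j`, then the kernel of `φ`
is contained in the commutator subgroup. -/
lemma ker_le_commutator {G : Type} [Group G]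
    (φ : G →* Multiplicative (V ι)) (g : ι → G)
    (hg : ∀ j, φ (g j) = Multiplicative.ofAdd (stdb j))
    (hsq : ∀ j, g j ^ 2 = 1)
    (hgen : Subgroup.closure (Set.range g) = ⊤) :
    φ.ker ≤ commutator G := by
  classical
  set q : G →* Abelianization G := Abelianization.of
  have hq2 : ∀ j, (q (g j)) ^ 2 = 1 := by
    intro j; rw [← map_pow, hsq j, map_one]
  -- the section `S : Multiplicative (V ι) →* Abelianization G`
  set S : Multiplicative (V ι) →* Abelianization G :=
    { toFun := fun v => ∏ j, (q (g j)) ^ ((Multiplicative.toAdd v j).val)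
      map_one' := by
        simp only [toAdd_one, Pi.zero_apply, ZMod.val_zero, pow_zero, Finset.prod_const_one]
      map_mul' := by
        intro v w
        rw [← Finset.prod_mul_distrib]
        refine Finset.prod_congr rfl fun j _ => ?_
        rw [toAdd_mul, Pi.add_apply, pow_val_add (hq2 j)] } with hS
  have key : ∀ x : G, S (φ x) = q x := by
    intro x
    have hx : x ∈ Subgroup.closure (Set.range g) := by rw [hgen]; trivial
    induction hx using Subgroup.closure_induction with
    | mem y hy =>
      obtain ⟨i, rfl⟩ := hy
      rw [hg i, hS]
      simp only [MonoidHom.coe_mk, OneHom.coe_mk, toAdd_ofAdd]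
      rw [Finset.prod_eq_single i]
      · simp [stdb, Pi.single_eq_same, ZMod.val_one]
      · intro j _ hj
        simp [stdb, Pi.single_eq_of_ne hj]
      · simp
    | one => simp
    | mul y z _ _ ihy ihz => rw [map_mul, map_mul, map_mul, ihy, ihz]
    | inv y _ ihy => rw [map_inv, map_inv, map_inv, ihy]
  intro x hx
  have h1 : q x = 1 := by
    rw [← key x, MonoidHom.mem_ker.mp hx, map_one]
  have : (QuotientGroup.mk x : G ⧸ commutator G) = 1 := h1
  exact (QuotientGroup.eq_one_iff x).mp this

/-- The product of two `n`-expansion groups: the subgroup of `G × G'` generated by the pairs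
`(g_i, g'_i)`, with the restriction of `φ ∘ pr_1`, is again an `n`-expansion group. -/
theorem statement15 (n : ℕ) (G G' : Type) [Group G] [Group G']
    (φ : G →* Multiplicative (V (Fin n))) (g : Fin n → G)
    (φ' : G' →* Multiplicative (V (Fin n))) (g' : Fin n → G')
    (h : IsExpGroup φ g) (h' : IsExpGroup φ' g') :
    IsExpGroup
      ((φ.comp (MonoidHom.fst G G')).comp
        (Subgroup.closure (Set.range fun i => (g i, g' i))).subtype)
      (fun i => (⟨(g i, g' i), Subgroup.subset_closure ⟨i, rfl⟩⟩ :
        ↥(Subgroup.closure (Set.range fun i => (g i, g' i))))) := by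
  classical
  set T : Set (G × G') := Set.range fun i => (g i, g' i) with hT
  set H : Subgroup (G × G') := Subgroup.closure T with hH
  set t : Fin n → ↥H := fun i => ⟨(g i, g' i), Subgroup.subset_closure ⟨i, rfl⟩⟩ with ht
  set Φ : ↥H →* Multiplicative (V (Fin n)) :=
    (φ.comp (MonoidHom.fst G G')).comp H.subtype with hΦ
  -- components have equal images under φ, φ'
  have comp_eq : ∀ x : G × G', x ∈ H → φ x.1 = φ' x.2 := by
    intro x hx
    induction hx using Subgroup.closure_induction with
    | mem y hy =>
      obtain ⟨i, rfl⟩ := hy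
      rw [h.phi_g i, h'.phi_g i]
    | one => simp
    | mul y z _ _ ihy ihz => rw [Prod.fst_mul, Prod.snd_mul, map_mul, map_mul, ihy, ihz]
    | inv y _ ihy => rw [Prod.fst_inv, Prod.snd_inv, map_inv, map_inv, ihy]
  have tsq : ∀ i, t i ^ 2 = 1 := by
    intro i
    ext
    · exact h.g_sq i
    · exact h'.g_sq i
  have hgen : Subgroup.closure (Set.range t) = ⊤ := by
    rw [eq_top_iff, ← Subgroup.closure_preimage_eq_top T]
    apply Subgroup.closure_le _ |>.mpr
    rintro x hx
    obtain ⟨i, hi⟩ := hx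
    have : x = t i := Subtype.ext hi.symm
    exact this ▸ Subgroup.subset_closure ⟨i, rfl⟩
  constructor
  · intro j
    exact h.phi_g j
  · rintro ⟨a, ha⟩ ⟨b, hb⟩ hfa hfb
    have ha1 : φ a.1 = 1 := hfa
    have hb1 : φ b.1 = 1 := hfb
    have ha2 : φ' a.2 = 1 := (comp_eq a ha).symm.trans ha1
    have hb2 : φ' b.2 = 1 := (comp_eq b hb).symm.trans hb1
    ext
    · exact h.ker_comm a.1 b.1 ha1 hb1
    · exact h'.ker_comm a.2 b.2 ha2 hb2
  · rintro ⟨a, ha⟩ hfa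
    have ha1 : φ a.1 = 1 := hfa
    have ha2 : φ' a.2 = 1 := (comp_eq a ha).symm.trans ha1
    ext
    · exact h.ker_sq a.1 ha1
    · exact h'.ker_sq a.2 ha2
  · apply le_antisymm
    · exact Abelianization.commutator_subset_ker Φ
    · exact ker_le_commutator Φ t (fun j => h.phi_g j) tsq hgen
  · exact tsq

end HigherGenus
end
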